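/- arXiv:2404.13280 — 6 statements merged into one kernel-verified Lean document; each statement's English description precedes it below -/
import Mathlib

section
/- A function f : [0,∞) → [0,∞) is ultrametric preserving (i.e., f ∘ d is an ultrametric on X whenever d is an ultrametric on X) if and only if f is increasing (monotone nondecreasing) and amenable (f⁻¹(0) = {0}). -/
open scoped NNReal

/-!
Monotone maps commute with `max`, so a monotone amenable `f` carries the strong triangle
inequality of `ρ` to `f ∘ ρ`. Conversely, it suffices to test `f` on the three-point space whose
sides have lengths `a, b, b` with `0 < a ≤ b`: taking `a = b = t` forces `f t ≠ 0`, and the strong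
triangle inequality on the short side gives `f a ≤ max (f b) (f b) = f b`.
-/

/-- `ρ` is a metric on `Y` (valued in `ℝ≥0 = [0,∞)`). -/
def IsMetric {Y : Type} (ρ : Y → Y → ℝ≥0) : Prop :=
  (∀ x y, ρ x y = 0 ↔ x = y) ∧ (∀ x y, ρ x y = ρ y x) ∧
    (∀ x y z, ρ x y ≤ ρ x z + ρ z y)

/-- `ρ` is an ultrametric on `Y`. -/
def IsUltrametric {Y : Type} (ρ : Y → Y → ℝ≥0) : Prop :=
  (∀ x y, ρ x y = 0 ↔ x = y) ∧ (∀ x y, ρ x y = ρ y x) ∧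
    (∀ x y z, ρ x y ≤ max (ρ x z) (ρ z y))

/-- `ρ` is a discrete metric: some `k > 0` with `ρ x y = k` for all distinct `x, y`. -/
def IsDiscreteMetric {Y : Type} (ρ : Y → Y → ℝ≥0) : Prop :=
  ∃ k : ℝ≥0, 0 < k ∧ ∀ x y, x ≠ y → ρ x y = k

/-- `f` is metric preserving. -/
def MetricPreserving (f : ℝ≥0 → ℝ≥0) : Prop :=
  ∀ (Y : Type) (ρ : Y → Y → ℝ≥0), IsMetric ρ → IsMetric fun a b => f (ρ a b)

/-- `f` is ultrametric preserving. -/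
def UltrametricPreserving (f : ℝ≥0 → ℝ≥0) : Prop :=
  ∀ (Y : Type) (ρ : Y → Y → ℝ≥0), IsUltrametric ρ → IsUltrametric fun a b => f (ρ a b)

/-- A class of (distance-)spaces: a predicate on pairs `(Y, ρ)`. -/
def MClass : Type 1 := ∀ Y : Type, (Y → Y → ℝ≥0) → Prop

/-- `f ∈ P_X`: `f` preserves the class `X`. -/
def Preserves (X : MClass) (f : ℝ≥0 → ℝ≥0) : Prop :=
  ∀ (Y : Type) (ρ : Y → Y → ℝ≥0), X Y ρ → X Y fun a b => f (ρ a b)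


theorem IsUltrametric.comp_of_monotone {Y : Type} {ρ : Y → Y → ℝ≥0} (hρ : IsUltrametric ρ)
    {f : ℝ≥0 → ℝ≥0} (hf : Monotone f) (hf0 : ∀ t, f t = 0 ↔ t = 0) :
    IsUltrametric fun a b => f (ρ a b) := by
  obtain ⟨hρ0, hρsymm, hρmax⟩ := hρ
  refine ⟨fun x y => (hf0 _).trans (hρ0 x y), fun x y => congrArg f (hρsymm x y), fun x y z => ?_⟩
  calc f (ρ x y) ≤ f (max (ρ x z) (ρ z y)) := hf (hρmax x y z)
    _ = max (f (ρ x z)) (f (ρ z y)) := hf.map_max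

def isoscelesDist (a b : ℝ≥0) (i j : Fin 3) : ℝ≥0 :=
  if i = j then 0 else if i ≠ 2 ∧ j ≠ 2 then a else b

theorem isUltrametric_isoscelesDist {a b : ℝ≥0} (ha : 0 < a) (hab : a ≤ b) :
    IsUltrametric (isoscelesDist a b) := by
  have hb : 0 < b := ha.trans_le hab
  refine ⟨fun x y => ?_, fun x y => ?_, fun x y z => ?_⟩ <;>
    fin_cases x <;> fin_cases y <;> try fin_cases z
  all_goals simp [isoscelesDist, ha.ne', hb.ne', hab]

namespace UltrametricPreserving

variable {f : ℝ≥0 → ℝ≥0}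

theorem apply_eq_zero_iff (hf : UltrametricPreserving f) (t : ℝ≥0) : f t = 0 ↔ t = 0 := by
  rcases eq_or_ne t 0 with rfl | ht
  · simpa [isoscelesDist] using
      (hf _ _ (isUltrametric_isoscelesDist one_pos le_rfl)).1 0 0
  · simpa [isoscelesDist, ht] using
      (hf _ _ (isUltrametric_isoscelesDist (pos_iff_ne_zero.2 ht) le_rfl)).1 0 1

theorem monotone (hf : UltrametricPreserving f) : Monotone f := by
  intro a b hab
  rcases eq_or_ne a 0 with rfl | ha
  · simp [(hf.apply_eq_zero_iff 0).2 rfl]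
  · simpa [isoscelesDist] using
      (hf _ _ (isUltrametric_isoscelesDist (pos_iff_ne_zero.2 ha) hab)).2.2 0 1 2

end UltrametricPreserving

/-- f is ultrametric preserving iff f is increasing and amenable. -/
theorem stmt_2 (f : ℝ≥0 → ℝ≥0) :
    UltrametricPreserving f ↔ Monotone f ∧ ∀ t, f t = 0 ↔ t = 0 :=
  ⟨fun hf => ⟨hf.monotone, hf.apply_eq_zero_iff⟩,
    fun ⟨hmono, hzero⟩ _ _ hρ => hρ.comp_of_monotone hmono hzero⟩
end

section
/- A function f : [0,∞) → [0,∞) is both metric preserving and ultrametric preserving if and only if f is amenable, increasing, and subadditive. -/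
open scoped NNReal

/-- `ρ` is a discrete metric: some `k > 0` with `ρ x y = k` for all distinct `x, y`. -/
def IsDiscreteDist {Y : Type} (ρ : Y → Y → ℝ≥0) : Prop :=
  ∃ k : ℝ≥0, 0 < k ∧ ∀ x y, x ≠ y → ρ x y = k

/-!
Necessity is tested on three-point spaces: the equilateral triangle of side `t > 0` is an
ultrametric space, so `f t ≠ 0`; the isosceles triangle with sides `a ≤ b = b` is ultrametric,
so `f a ≤ max (f b) (f b)`; the degenerate triangle with sides `x, y, x + y` is a metric space,
so `f (x + y) ≤ f x + f y`. Conversely, a monotone `f` carries `ρ x y ≤ ρ x z + ρ z y` to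
`f (ρ x y) ≤ f (ρ x z + ρ z y)`, which subadditivity bounds, and commutes with `max`.
-/

def triangleDist (a b c : ℝ≥0) : Fin 3 → Fin 3 → ℝ≥0 :=
  ![![0, a, c], ![a, 0, b], ![c, b, 0]]

section triangleDist

variable {a b c : ℝ≥0}

lemma triangleDist_eq_zero_iff (ha : 0 < a) (hb : 0 < b) (hc : 0 < c) (i j : Fin 3) :
    triangleDist a b c i j = 0 ↔ i = j := by
  fin_cases i <;> fin_cases j <;> simp [triangleDist, ha.ne', hb.ne', hc.ne']

lemma triangleDist_comm (i j : Fin 3) : triangleDist a b c i j = triangleDist a b c j i := by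
  fin_cases i <;> fin_cases j <;> rfl

lemma isMetric_triangleDist (ha : 0 < a) (hb : 0 < b) (hc : 0 < c)
    (hab : c ≤ a + b) (hbc : a ≤ b + c) (hca : b ≤ c + a) : IsMetric (triangleDist a b c) := by
  refine ⟨triangleDist_eq_zero_iff ha hb hc, triangleDist_comm, fun i j k => ?_⟩
  fin_cases i <;> fin_cases j <;> fin_cases k <;> simp [triangleDist] <;>
    first
    | assumption
    | (rw [add_comm]; assumption)

lemma isUltrametric_triangleDist (ha : 0 < a) (hb : 0 < b) (hc : 0 < c)
    (hab : c ≤ max a b) (hbc : a ≤ max b c) (hca : b ≤ max c a) :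
    IsUltrametric (triangleDist a b c) := by
  refine ⟨triangleDist_eq_zero_iff ha hb hc, triangleDist_comm, fun i j k => ?_⟩
  rw [le_max_iff] at hab hbc hca
  fin_cases i <;> fin_cases j <;> fin_cases k <;> simp [triangleDist] <;> tauto

end triangleDist

section

variable {f : ℝ≥0 → ℝ≥0}

lemma UltrametricPreserving.map_eq_zero_iff (hf : UltrametricPreserving f) (t : ℝ≥0) :
    f t = 0 ↔ t = 0 := by
  have equilateral {s : ℝ≥0} (hs : 0 < s) : IsUltrametric fun i j => f (triangleDist s s s i j) :=
    hf _ _ (isUltrametric_triangleDist hs hs hs (le_max_left _ _) (le_max_left _ _)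
      (le_max_left _ _))
  constructor
  · intro hft
    by_contra ht
    have := ((equilateral (pos_iff_ne_zero.mpr ht)).1 0 1).mp hft
    exact absurd this (by decide)
  · rintro rfl
    exact ((equilateral one_pos).1 0 0).mpr rfl

lemma UltrametricPreserving.monotone_s3 (hf : UltrametricPreserving f) : Monotone f := by
  intro a b hab
  rcases eq_zero_or_pos a with rfl | ha
  · simp [(hf.map_eq_zero_iff 0).mpr rfl]
  have hb := ha.trans_le hab
  have := (hf _ _ (isUltrametric_triangleDist ha hb hb (le_max_right _ _)
    (le_max_of_le_left hab) (le_max_left _ _))).2.2 0 1 2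
  simpa [triangleDist] using this

lemma MetricPreserving.map_add_le (hf : MetricPreserving f) (x y : ℝ≥0) :
    f (x + y) ≤ f x + f y := by
  rcases eq_zero_or_pos x with rfl | hx
  · simp
  rcases eq_zero_or_pos y with rfl | hy
  · simp
  have := (hf _ _ (isMetric_triangleDist hx hy (add_pos hx hy) le_rfl
    (le_add_left le_self_add) (le_add_right le_add_self))).2.2 0 2 1
  simpa [triangleDist] using this

lemma metricPreserving_of_monotone_of_subadditive (h0 : ∀ t, f t = 0 ↔ t = 0)
    (hmono : Monotone f) (hsub : ∀ x y, f (x + y) ≤ f x + f y) : MetricPreserving f := by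
  rintro Y ρ ⟨hρ0, hρsymm, hρtri⟩
  refine ⟨fun a b => (h0 _).trans (hρ0 a b), fun a b => congrArg f (hρsymm a b), fun a b c => ?_⟩
  exact (hmono (hρtri a b c)).trans (hsub _ _)

lemma ultrametricPreserving_of_monotone (h0 : ∀ t, f t = 0 ↔ t = 0) (hmono : Monotone f) :
    UltrametricPreserving f := by
  rintro Y ρ ⟨hρ0, hρsymm, hρtri⟩
  refine ⟨fun a b => (h0 _).trans (hρ0 a b), fun a b => congrArg f (hρsymm a b), fun a b c => ?_⟩
  exact (hmono (hρtri a b c)).trans_eq hmono.map_max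

end

/-- f is both metric and ultrametric preserving iff f is amenable, increasing and subadditive. -/
theorem stmt_3 (f : ℝ≥0 → ℝ≥0) :
    (MetricPreserving f ∧ UltrametricPreserving f) ↔
      ((∀ t, f t = 0 ↔ t = 0) ∧ Monotone f ∧ ∀ x y, f (x + y) ≤ f x + f y) := by
  constructor
  · rintro ⟨hm, hu⟩
    exact ⟨hu.map_eq_zero_iff, hu.monotone_s3, hm.map_add_le⟩
  · rintro ⟨h0, hmono, hsub⟩
    exact ⟨metricPreserving_of_monotone_of_subadditive h0 hmono hsub,
      ultrametricPreserving_of_monotone h0 hmono⟩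
end

section
/- Let X be a class of metric spaces. Then P_X equals the set Am of all amenable functions if and only if: every space in X is discrete, X contains a space with at least two points, and for every (X₁,d₁) ∈ X, every discrete metric space on the same underlying set X₁ also belongs to X. -/
open scoped NNReal

/-! If `P_X = Am`, composing with the amenable function `spike c` keeps every space of `X` a
metric, which forces all triangles to be equilateral, so every space of `X` is discrete. An
amenable map exchanging two positive constants then carries a member of `X` to any discrete metric
on the same set, and if all spaces of `X` had at most one point, the non-amenable constant `0`
would preserve `X`. Conversely, amenable functions map discrete metrics to discrete metrics, and
the discrete metric with value `t` on a set with two points shows that every `f ∈ P_X` vanishes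
exactly at `0`. -/

def Amenable (f : ℝ≥0 → ℝ≥0) : Prop :=
  ∀ t, f t = 0 ↔ t = 0

section DiscreteDist

variable {Y : Type} {ρ ρ' : Y → Y → ℝ≥0}

lemma IsDiscreteDist.isMetric (hρ : IsDiscreteDist ρ) (hdiag : ∀ x, ρ x x = 0) :
    IsMetric ρ := by
  obtain ⟨k, hk, hρk⟩ := hρ
  refine ⟨fun x y => ?_, fun x y => ?_, fun x y z => ?_⟩
  · by_cases hxy : x = y
    · simp [hxy, hdiag]
    · simp [hxy, hρk x y hxy, hk.ne']
  · by_cases hxy : x = y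
    · rw [hxy]
    · rw [hρk x y hxy, hρk y x (Ne.symm hxy)]
  · by_cases hxy : x = y
    · simp [hxy, hdiag]
    by_cases hxz : x = z
    · subst hxz
      simp [hdiag]
    · rw [hρk x y hxy, hρk x z hxz]
      exact le_self_add

lemma IsDiscreteDist.comp {f : ℝ≥0 → ℝ≥0} (hρ : IsDiscreteDist ρ) (hf : Amenable f) :
    IsDiscreteDist fun a b => f (ρ a b) := by
  obtain ⟨k, hk, hρk⟩ := hρ
  exact ⟨f k, pos_iff_ne_zero.2 fun h => hk.ne' ((hf k).1 h),
    fun x y hxy => congrArg f (hρk x y hxy)⟩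

lemma isDiscreteDist_of_subsingleton [Subsingleton Y] : IsDiscreteDist ρ :=
  ⟨1, one_pos, fun x y hxy => absurd (Subsingleton.elim x y) hxy⟩

lemma IsDiscreteDist.exists_amenable_comp_eq (hρ : IsMetric ρ) (hd : IsDiscreteDist ρ)
    (hρ' : IsMetric ρ') (hd' : IsDiscreteDist ρ') :
    ∃ f, Amenable f ∧ (fun a b => f (ρ a b)) = ρ' := by
  classical
  obtain ⟨k, hk, hρk⟩ := hd
  obtain ⟨k', hk', hρk'⟩ := hd'
  refine ⟨fun u => if u = k then k' else u, fun t => ?_, funext₂ fun x y => ?_⟩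
  · by_cases htk : t = k
    · simp [htk, hk.ne', hk'.ne']
    · simp [htk]
  · by_cases hxy : x = y
    · simp [(hρ.1 x y).2 hxy, (hρ'.1 x y).2 hxy, hk.ne]
    · simp [hρk x y hxy, hρk' x y hxy]

open Classical in
noncomputable def discreteDist (t : ℝ≥0) : Y → Y → ℝ≥0 :=
  fun x y => if x = y then 0 else t

lemma isDiscreteDist_discreteDist {t : ℝ≥0} (ht : 0 < t) :
    IsDiscreteDist (discreteDist (Y := Y) t) :=
  ⟨t, ht, fun x y hxy => by simp [discreteDist, hxy]⟩

lemma isMetric_discreteDist {t : ℝ≥0} (ht : 0 < t) : IsMetric (discreteDist (Y := Y) t) :=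
  (isDiscreteDist_discreteDist ht).isMetric fun x => by simp [discreteDist]

end DiscreteDist

section Spike

open Classical in
/-- After composing with `spike c`, a side of length `c` is longer than any two other sides
together. -/
noncomputable def spike (c : ℝ≥0) : ℝ≥0 → ℝ≥0 :=
  fun u => if u = 0 then 0 else if u = c then 3 else 1

lemma spike_amenable (c : ℝ≥0) : Amenable (spike c) := by
  intro t
  unfold spike
  split_ifs <;> simp_all

variable {Y : Type} {ρ : Y → Y → ℝ≥0}

lemma eq_or_eq_of_isMetric_spike (hspike : ∀ c, IsMetric fun a b => spike c (ρ a b))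
    {x y z : Y} (hxy : ρ x y ≠ 0) (hxz : ρ x z ≠ 0) (hzy : ρ z y ≠ 0) :
    ρ x z = ρ x y ∨ ρ z y = ρ x y := by
  by_contra! h
  have htri := (hspike (ρ x y)).2.2 x y z
  simp only [spike, hxy, hxz, hzy, h.1, h.2, if_true, if_false] at htri
  norm_num at htri

lemma isDiscreteDist_of_forall_dist_eq (hρ : IsMetric ρ)
    (hstar : ∀ x y z, y ≠ x → z ≠ x → ρ x y = ρ x z) : IsDiscreteDist ρ := by
  by_cases hY : ∃ a b : Y, a ≠ b
  · obtain ⟨a, b, hab⟩ := hY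
    refine ⟨ρ a b, pos_iff_ne_zero.2 fun h => hab ((hρ.1 a b).1 h), fun x y hxy => ?_⟩
    by_cases hxa : x = a
    · subst hxa
      exact hstar x y b (Ne.symm hxy) (Ne.symm hab)
    · rw [hstar x y a (Ne.symm hxy) (Ne.symm hxa), hρ.2.1 x a, hstar a x b hxa (Ne.symm hab)]
  · push Not at hY
    have : Subsingleton Y := ⟨hY⟩
    exact isDiscreteDist_of_subsingleton

lemma isDiscreteDist_of_isMetric_spike (hρ : IsMetric ρ)
    (hspike : ∀ c, IsMetric fun a b => spike c (ρ a b)) : IsDiscreteDist ρ := by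
  refine isDiscreteDist_of_forall_dist_eq hρ fun x y z hyx hzx => ?_
  by_cases hyz : y = z
  · rw [hyz]
  have hpos : ∀ {u v : Y}, u ≠ v → ρ u v ≠ 0 := fun huv h => huv ((hρ.1 _ _).1 h)
  rcases eq_or_eq_of_isMetric_spike hspike (hpos (Ne.symm hyx)) (hpos (Ne.symm hzx))
    (hpos (Ne.symm hyz)) with h | hzy
  · exact h.symm
  rcases eq_or_eq_of_isMetric_spike hspike (hpos (Ne.symm hzx)) (hpos (Ne.symm hyx))
    (hpos hyz) with h | hyz'
  · exact h
  · rw [← hzy, hρ.2.1 z y, hyz']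

end Spike

section Preserves

variable {X : MClass}

lemma preserves_zero_of_forall_subsingleton
    (hX : ∀ (Y : Type) (ρ : Y → Y → ℝ≥0), X Y ρ → IsMetric ρ)
    (htriv : ∀ (Y : Type) (ρ : Y → Y → ℝ≥0), X Y ρ → ∀ a b : Y, a = b) :
    Preserves X fun _ => 0 := by
  intro Y ρ hρ
  convert hρ using 1
  funext a b
  exact (((hX Y ρ hρ).1 a b).2 (htriv Y ρ hρ a b)).symm

lemma amenable_of_preserves (hX : ∀ (Y : Type) (ρ : Y → Y → ℝ≥0), X Y ρ → IsMetric ρ)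
    {Y₀ : Type} {ρ₀ : Y₀ → Y₀ → ℝ≥0} (hρ₀ : X Y₀ ρ₀) {a b : Y₀} (hab : a ≠ b)
    (hclosed : ∀ ρ' : Y₀ → Y₀ → ℝ≥0, IsMetric ρ' → IsDiscreteDist ρ' → X Y₀ ρ')
    {f : ℝ≥0 → ℝ≥0} (hf : Preserves X f) : Amenable f := by
  have hzero : ∀ {ρ : Y₀ → Y₀ → ℝ≥0}, X Y₀ ρ → ∀ x y, f (ρ x y) = 0 ↔ ρ x y = 0 :=
    fun hρ x y => by rw [(hX _ _ (hf _ _ hρ)).1 x y, (hX _ _ hρ).1 x y]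
  intro t
  rcases eq_zero_or_pos t with rfl | ht
  · simpa [((hX _ _ hρ₀).1 a a).2 rfl] using hzero hρ₀ a a
  · simpa [discreteDist, hab] using
      hzero (hclosed _ (isMetric_discreteDist ht) (isDiscreteDist_discreteDist ht)) a b

lemma preserves_of_amenable (hX : ∀ (Y : Type) (ρ : Y → Y → ℝ≥0), X Y ρ → IsMetric ρ)
    (hdisc : ∀ (Y : Type) (ρ : Y → Y → ℝ≥0), X Y ρ → IsDiscreteDist ρ)
    (hclosed : ∀ (Y : Type) (ρ : Y → Y → ℝ≥0), X Y ρ →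
      ∀ ρ' : Y → Y → ℝ≥0, IsMetric ρ' → IsDiscreteDist ρ' → X Y ρ')
    {f : ℝ≥0 → ℝ≥0} (hf : Amenable f) : Preserves X f := by
  intro Y ρ hρ
  have hd := (hdisc Y ρ hρ).comp hf
  refine hclosed Y ρ hρ _ (hd.isMetric fun x => ?_) hd
  simp [((hX Y ρ hρ).1 x x).2 rfl, (hf 0).2 rfl]

end Preserves

/-- P_X = Am iff every space of X is discrete, X contains a space with at least two points, and X contains every discrete metric space whose underlying set carries some member of X. -/
theorem stmt_9 (X : MClass)
    (hX : ∀ (Y : Type) (ρ : Y → Y → ℝ≥0), X Y ρ → IsMetric ρ) :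
    {f : ℝ≥0 → ℝ≥0 | Preserves X f} = {f : ℝ≥0 → ℝ≥0 | ∀ t, f t = 0 ↔ t = 0} ↔
      ((∀ (Y : Type) (ρ : Y → Y → ℝ≥0), X Y ρ → IsDiscreteDist ρ) ∧
        (∃ (Y : Type) (ρ : Y → Y → ℝ≥0), X Y ρ ∧ ∃ a b : Y, a ≠ b) ∧
        (∀ (Y : Type) (ρ : Y → Y → ℝ≥0), X Y ρ →
          ∀ ρ' : Y → Y → ℝ≥0, IsMetric ρ' → IsDiscreteDist ρ' → X Y ρ')) := by
  constructor
  · intro h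
    have hAm : ∀ f, Amenable f → Preserves X f := fun f => (Set.ext_iff.1 h f).2
    have hP : ∀ f, Preserves X f → Amenable f := fun f => (Set.ext_iff.1 h f).1
    have hdisc : ∀ (Y : Type) (ρ : Y → Y → ℝ≥0), X Y ρ → IsDiscreteDist ρ := fun Y ρ hρ =>
      isDiscreteDist_of_isMetric_spike (hX Y ρ hρ) fun c =>
        hX Y _ (hAm _ (spike_amenable c) Y ρ hρ)
    refine ⟨hdisc, ?_, fun Y ρ hρ ρ' hρ' hd' => ?_⟩
    · by_contra! htriv
      exact one_ne_zero ((hP _ (preserves_zero_of_forall_subsingleton hX htriv) 1).1 rfl)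
    · obtain ⟨f, hf, rfl⟩ :=
        (hdisc Y ρ hρ).exists_amenable_comp_eq (hX Y ρ hρ) hρ' hd'
      exact hAm f hf Y ρ hρ
  · rintro ⟨hdisc, ⟨Y₀, ρ₀, hρ₀, a, b, hab⟩, hclosed⟩
    ext f
    exact ⟨amenable_of_preserves hX hρ₀ hab (hclosed Y₀ ρ₀ hρ₀),
      preserves_of_amenable hX hdisc hclosed⟩
end

section
/- Let A be a nonempty set of metric preserving functions. The following are equivalent: (i) there exists a class X of metric spaces with P_X = A; (ii) A is a submonoid of the monoid of all functions [0,∞) → [0,∞) under composition; (iii) A is a submonoid of the monoid of metric preserving functions under composition. -/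
open scoped NNReal

/-!
Preservers of any class form a submonoid under composition. Conversely, a submonoid `A` of
metric preserving functions is realised by the class of the spaces `(ℝ≥0, f ∘ d)`, `f ∈ A`, with
`d` the usual metric of `ℝ≥0`: a preserver `f` sends `d` to some `g ∘ d` with `g ∈ A`, and
evaluating at `(0, x)` gives `f = g`.
-/

lemma preserves_id (X : MClass) : Preserves X id :=
  fun _ _ h => h

lemma Preserves.comp {X : MClass} {f g : ℝ≥0 → ℝ≥0} (hf : Preserves X f) (hg : Preserves X g) :
    Preserves X (f ∘ g) :=
  fun Y ρ h => hf Y _ (hg Y ρ h)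

lemma isMetric_nndist : IsMetric (fun a b : ℝ≥0 => nndist a b) :=
  ⟨fun _ _ => nndist_eq_zero, nndist_comm, fun x y z => nndist_triangle x z y⟩

/-- The equation `Y = ℝ≥0` puts the spaces `(ℝ≥0, f ∘ nndist)` into a class indexed by all
`Y : Type`. -/
def nndistCompClass (A : Set (ℝ≥0 → ℝ≥0)) : MClass :=
  fun Y ρ => ∃ f ∈ A, ∃ h : Y = ℝ≥0, ρ = fun a b => f (nndist (cast h a) (cast h b))

lemma isMetric_of_nndistCompClass {A : Set (ℝ≥0 → ℝ≥0)} (hA : ∀ f ∈ A, MetricPreserving f)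
    {Y : Type} {ρ : Y → Y → ℝ≥0} (hρ : nndistCompClass A Y ρ) : IsMetric ρ := by
  obtain ⟨f, hf, rfl, rfl⟩ := hρ
  exact hA f hf ℝ≥0 _ isMetric_nndist

lemma preserves_nndistCompClass_iff {A : Set (ℝ≥0 → ℝ≥0)} (hid : id ∈ A)
    (hcomp : ∀ f ∈ A, ∀ g ∈ A, f ∘ g ∈ A) {f : ℝ≥0 → ℝ≥0} :
    Preserves (nndistCompClass A) f ↔ f ∈ A := by
  constructor
  · intro hf
    obtain ⟨g, hg, _, hfg⟩ := hf ℝ≥0 _ ⟨id, hid, rfl, rfl⟩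
    have hf_eq_g : f = g := funext fun x => by
      simpa [NNReal.nndist_zero_eq_val] using congrFun (congrFun hfg 0) x
    exact hf_eq_g ▸ hg
  · rintro hf Y ρ ⟨g, hg, h, rfl⟩
    exact ⟨f ∘ g, hcomp f hf g hg, h, rfl⟩

theorem stmt_12_general (A : Set (ℝ≥0 → ℝ≥0))
    (hA : ∀ f ∈ A, MetricPreserving f) :
    List.TFAE
      [∃ X : MClass, (∀ (Y : Type) (ρ : Y → Y → ℝ≥0), X Y ρ → IsMetric ρ) ∧
          {f : ℝ≥0 → ℝ≥0 | Preserves X f} = A,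
        id ∈ A ∧ ∀ f ∈ A, ∀ g ∈ A, f ∘ g ∈ A,
        (∀ f ∈ A, MetricPreserving f) ∧ id ∈ A ∧ ∀ f ∈ A, ∀ g ∈ A, f ∘ g ∈ A] := by
  tfae_have 1 → 2 := by
    rintro ⟨X, -, rfl⟩
    exact ⟨preserves_id X, fun f hf g hg => Preserves.comp hf hg⟩
  tfae_have 2 → 1 := fun ⟨hid, hcomp⟩ =>
    ⟨nndistCompClass A, fun _ _ => isMetric_of_nndistCompClass hA,
      Set.ext fun _ => preserves_nndistCompClass_iff hid hcomp⟩
  tfae_have 2 ↔ 3 := ⟨fun h => ⟨hA, h⟩, And.right⟩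
  tfae_finish

/-- For a nonempty set A of metric preserving functions, TFAE: (i) P_X = A for some class X of metric spaces; (ii) A is a submonoid of (F, ∘); (iii) A is a submonoid of (P_M, ∘). -/
theorem stmt_12 (A : Set (ℝ≥0 → ℝ≥0)) (hne : A.Nonempty)
    (hA : ∀ f ∈ A, MetricPreserving f) :
    List.TFAE
      [∃ X : MClass, (∀ (Y : Type) (ρ : Y → Y → ℝ≥0), X Y ρ → IsMetric ρ) ∧
          {f : ℝ≥0 → ℝ≥0 | Preserves X f} = A,
        id ∈ A ∧ ∀ f ∈ A, ∀ g ∈ A, f ∘ g ∈ A,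
        (∀ f ∈ A, MetricPreserving f) ∧ id ∈ A ∧ ∀ f ∈ A, ∀ g ∈ A, f ∘ g ∈ A] :=
  stmt_12_general A hA
end

section
/- If A is a submonoid (under composition, containing the identity) of the monoid of metric preserving functions, then there exists a class X of metric spaces with P_X = A. Explicitly, fixing a metric space (X,d) whose set of distance values is all of [0,∞), the class X = {(X, f∘d) : f ∈ A} satisfies P_X = A. -/
open scoped NNReal

/- A function preserving `X` sends `(X₀, d) = (X₀, id ∘ d)` to some `(X₀, f ∘ d)` with `f ∈ A`; since
`d` attains every value, `g ∘ d = f ∘ d` forces `g = f`. Conversely, `g ∈ A` maps `(X₀, f ∘ d)` to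
`(X₀, (g ∘ f) ∘ d)`, and `g ∘ f ∈ A`. -/

section OrbitClass

variable {X₀ : Type} {d : X₀ → X₀ → ℝ≥0} {A : Set (ℝ≥0 → ℝ≥0)} {X : MClass}

theorem mem_of_preserves_of_orbit (hsurj : ∀ t : ℝ≥0, ∃ x y : X₀, d x y = t) (hid : id ∈ A)
    (hXdef : ∀ (Y : Type) (ρ : Y → Y → ℝ≥0),
      X Y ρ ↔ ∃ f ∈ A, ∃ h : Y = X₀, ∀ a b : Y, ρ a b = f (d (cast h a) (cast h b)))
    {g : ℝ≥0 → ℝ≥0} (hg : Preserves X g) : g ∈ A := by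
  have hXd : X X₀ d := (hXdef X₀ d).2 ⟨id, hid, rfl, fun _ _ => rfl⟩
  obtain ⟨f, hf, _, hgf⟩ := (hXdef X₀ _).1 (hg X₀ d hXd)
  have hgf_eq : g = f := funext fun t => by
    obtain ⟨x, y, rfl⟩ := hsurj t
    exact hgf x y
  exact hgf_eq ▸ hf

theorem preserves_of_mem_of_orbit (hcomp : ∀ f ∈ A, ∀ g ∈ A, f ∘ g ∈ A)
    (hXdef : ∀ (Y : Type) (ρ : Y → Y → ℝ≥0),
      X Y ρ ↔ ∃ f ∈ A, ∃ h : Y = X₀, ∀ a b : Y, ρ a b = f (d (cast h a) (cast h b)))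
    {g : ℝ≥0 → ℝ≥0} (hg : g ∈ A) : Preserves X g := by
  intro Y ρ hρ
  obtain ⟨f, hf, rfl, hρf⟩ := (hXdef _ ρ).1 hρ
  exact (hXdef _ _).2 ⟨g ∘ f, hcomp g hg f hf, rfl, fun a b => congrArg g (hρf a b)⟩

end OrbitClass

theorem stmt_13_general (X₀ : Type) (d : X₀ → X₀ → ℝ≥0)
    (hsurj : ∀ t : ℝ≥0, ∃ x y : X₀, d x y = t)
    (A : Set (ℝ≥0 → ℝ≥0))
    (hid : id ∈ A) (hcomp : ∀ f ∈ A, ∀ g ∈ A, f ∘ g ∈ A)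
    (X : MClass)
    (hXdef : ∀ (Y : Type) (ρ : Y → Y → ℝ≥0),
      X Y ρ ↔ ∃ f ∈ A, ∃ h : Y = X₀, ∀ a b : Y, ρ a b = f (d (cast h a) (cast h b))) :
    {g : ℝ≥0 → ℝ≥0 | Preserves X g} = A :=
  Set.ext fun _ =>
    ⟨mem_of_preserves_of_orbit hsurj hid hXdef, preserves_of_mem_of_orbit hcomp hXdef⟩

/-- If A is a submonoid of the metric preserving functions then, for a fixed metric space (X₀, d) whose distance set is all of [0,∞), the class X = {(X₀, f∘d) : f ∈ A} satisfies P_X = A. -/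
theorem stmt_13 (X₀ : Type) (d : X₀ → X₀ → ℝ≥0) (hd : IsMetric d)
    (hsurj : ∀ t : ℝ≥0, ∃ x y : X₀, d x y = t)
    (A : Set (ℝ≥0 → ℝ≥0)) (hA : ∀ f ∈ A, MetricPreserving f)
    (hid : id ∈ A) (hcomp : ∀ f ∈ A, ∀ g ∈ A, f ∘ g ∈ A)
    (X : MClass)
    (hXdef : ∀ (Y : Type) (ρ : Y → Y → ℝ≥0),
      X Y ρ ↔ ∃ f ∈ A, ∃ h : Y = X₀, ∀ a b : Y, ρ a b = f (d (cast h a) (cast h b))) :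
    {g : ℝ≥0 → ℝ≥0 | Preserves X g} = A :=
  stmt_13_general X₀ d hsurj A hid hcomp X hXdef
end

section
/- There is no class X of nonempty metric spaces such that P_X = {f₁, id}, where f₁(0)=1, f₁(1)=0, and f₁(t)=t otherwise; even though {f₁, id} is a submonoid of all functions [0,∞)→[0,∞) under composition. -/
open scoped NNReal

theorem Preserves.of_forall_not {X : MClass} (hX : ∀ Y ρ, ¬ X Y ρ) (f : ℝ≥0 → ℝ≥0) :
    Preserves X f :=
  fun Y ρ h => (hX Y ρ h).elim

theorem Preserves.map_zero {X : MClass} (hX : ∀ (Y : Type) (ρ : Y → Y → ℝ≥0), X Y ρ → IsMetric ρ)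
    {f : ℝ≥0 → ℝ≥0} (hf : Preserves X f) {Y : Type} [Nonempty Y] {ρ : Y → Y → ℝ≥0}
    (h : X Y ρ) : f 0 = 0 := by
  obtain ⟨hρ, -, -⟩ := hX Y ρ h
  obtain ⟨hfρ, -, -⟩ := hX Y _ (hf Y ρ h)
  let y : Y := Classical.arbitrary Y
  simpa only [(hρ y y).2 rfl] using (hfρ y y).2 rfl

/-- There is no class X of nonempty metric spaces with P_X = {f₁, id}, where f₁ swaps 0 and 1 and is the identity elsewhere. -/
theorem stmt_18 :
    ¬ ∃ X : MClass,
        (∀ (Y : Type) (ρ : Y → Y → ℝ≥0), X Y ρ → IsMetric ρ ∧ Nonempty Y) ∧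
        {f : ℝ≥0 → ℝ≥0 | Preserves X f} =
          {fun t : ℝ≥0 => if t = 0 then 1 else if t = 1 then 0 else t,
            (id : ℝ≥0 → ℝ≥0)} := by
  rintro ⟨X, hX, hP⟩
  have mem (f : ℝ≥0 → ℝ≥0) := Set.ext_iff.1 hP f
  by_cases hne : ∃ (Y : Type) (ρ : Y → Y → ℝ≥0), X Y ρ
  · obtain ⟨Y, ρ, h⟩ := hne
    have := (hX Y ρ h).2
    have hf₁_zero := Preserves.map_zero (fun Y ρ h => (hX Y ρ h).1) ((mem _).2 (Or.inl rfl)) h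
    simp at hf₁_zero
  · push Not at hne
    rcases (mem fun _ => 0).1 (Preserves.of_forall_not hne fun _ => 0) with h | h
    · simpa using congrFun h 0
    · simpa using congrFun h 1
end
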